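/- arXiv:2006.07246 — 2 statements merged into one kernel-verified Lean document; each statement's English description precedes it below -/
import Mathlib

section
/- Fixed points of Z (sufficient condition): if a digit string s has run-length representation (a_i, n_i)_i with n_i = 2 and a_i ≥ 2 for all i, then Z(s) = s. -/
/-- Run-length encoding of a digit string. -/
def rle : List ℕ → List (ℕ × ℕ)
  | [] => []
  | a :: t =>
    match rle t with
    | [] => [(a, 1)]
    | (b, n) :: r => if a = b then (b, n + 1) :: r else (a, 1) :: (b, n) :: r

/-- The "look-and-say-the-biggest" map: each maximal run of the digit `a` of length `n`
is replaced by the decimal digits of `max n a` followed by the digit `a`.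
(When `n ≤ 9` this is just the two digits `max n a`, `a`.) -/
def Z (s : List ℕ) : List ℕ :=
  ((rle s).map fun p => (Nat.digits 10 (max p.2 p.1)).reverse ++ [p.1]).flatten

/-- `r` is a run-length representation of the digit string `s`: all run lengths are
positive, consecutive base digits differ, and the expansion of `r` equals `s`. -/
def IsRLE (r : List (ℕ × ℕ)) (s : List ℕ) : Prop :=
  (∀ p ∈ r, 1 ≤ p.2) ∧ (r.map Prod.fst).Chain' (· ≠ ·) ∧
    (r.map fun p => List.replicate p.2 p.1).flatten = s

/-! On a run `(a, 2)` with `2 ≤ a ≤ 9`, `Z` writes the single decimal digit of `max 2 a = a`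
followed by `a`, which is the run itself; so `Z s` is the expansion of `rle s`, namely `s`. -/

theorem flatten_map_replicate_rle (s : List ℕ) :
    ((rle s).map fun p => List.replicate p.2 p.1).flatten = s := by
  induction s with
  | nil => rfl
  | cons a t ih =>
    unfold rle
    split
    · next h => simpa [h] using ih
    · next b n r h =>
      rw [h] at ih
      split_ifs with hab
      · subst hab; simpa [List.replicate_succ] using ih
      · simpa using ih

theorem fst_mem_of_mem_rle {s : List ℕ} {p : ℕ × ℕ} (hp : p ∈ rle s) : p.1 ∈ s := by
  induction s with
  | nil => simp [rle] at hp
  | cons a t ih =>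
    unfold rle at hp
    split at hp
    · next h => simp_all
    · next b n r h =>
      split_ifs at hp with hab
      · subst hab
        rcases List.mem_cons.1 hp with rfl | hp
        · simp
        · exact List.mem_cons_of_mem _ (ih (h ▸ List.mem_cons_of_mem _ hp))
      · rcases List.mem_cons.1 hp with rfl | hp
        · simp
        · exact List.mem_cons_of_mem _ (ih (h ▸ hp))

theorem digits_max_two_reverse_append {a : ℕ} (h2 : 2 ≤ a) (h9 : a ≤ 9) :
    (Nat.digits 10 (max 2 a)).reverse ++ [a] = List.replicate 2 a := by
  rw [max_eq_right h2, Nat.digits_of_lt 10 a (by omega) (by omega)]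
  rfl

/-- Fixed points of `Z`, sufficient condition: all runs of length 2 with digit ≥ 2. -/
theorem Z_fixed_of_runs_two (s : List ℕ) (hdig : ∀ d ∈ s, d ≤ 9)
    (h : ∀ p ∈ rle s, p.2 = 2 ∧ 2 ≤ p.1) : Z s = s := by
  have hblock : ∀ p ∈ rle s,
      (Nat.digits 10 (max p.2 p.1)).reverse ++ [p.1] = List.replicate p.2 p.1 := by
    rintro ⟨a, n⟩ hp
    obtain ⟨rfl, ha⟩ := h _ hp
    exact digits_max_two_reverse_append ha (hdig a (fst_mem_of_mem_rle hp))
  rw [Z, List.map_congr_left hblock, flatten_map_replicate_rle]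
end

section
/- Kid stability: if s is a kid digit string (all digits ≤ 3) in which no digit appears more than 3 times consecutively, then Z(s) is also a kid digit string in which no digit appears more than 3 times consecutively. -/
/-!
Each run `aⁿ` of `s` becomes the two digits `max n a, a`, which are single digits ≤ 3 for a kid
string with runs of length ≤ 3. So `Z s` reads `m₁ a₁ m₂ a₂ …` with consecutive `aᵢ` distinct, and
any four consecutive letters of it contain some `aᵢ, aᵢ₊₁`: no run can be longer than three.
-/

theorem isRLE_rle (s : List ℕ) : IsRLE (rle s) s := by
  induction s with
  | nil => exact ⟨by simp [rle], List.IsChain.nil, rfl⟩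
  | cons a t ih =>
    obtain ⟨hpos, hchain, hflat⟩ := ih
    rw [rle]
    rcases h : rle t with _ | ⟨⟨b, n⟩, r⟩
    · rw [h] at hflat
      exact ⟨by simp, List.isChain_singleton a, by simp [← hflat]⟩
    · rw [h] at hpos hchain hflat
      dsimp only
      split_ifs with hab
      · subst hab
        refine ⟨List.forall_mem_cons.mpr ⟨Nat.le_add_left 1 n, (List.forall_mem_cons.mp hpos).2⟩,
          by simpa using hchain, by simpa [List.replicate_succ] using hflat⟩
      · exact ⟨List.forall_mem_cons.mpr ⟨le_rfl, hpos⟩, List.IsChain.cons_cons hab hchain,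
          by simpa using hflat⟩

theorem replicate_infix_of_mem_rle {s : List ℕ} {p : ℕ × ℕ} (hp : p ∈ rle s) :
    List.replicate p.2 p.1 <:+: s :=
  (isRLE_rle s).2.2 ▸ List.infix_of_mem_flatten (List.mem_map_of_mem hp)

theorem Z_eq_flatMap {s : List ℕ} (h : ∀ p ∈ rle s, max p.2 p.1 < 10) :
    Z s = (rle s).flatMap fun p => [max p.2 p.1, p.1] := by
  rw [Z, List.flatMap_def]
  refine congrArg List.flatten (List.map_congr_left fun p hp => ?_)
  have hpos : max p.2 p.1 ≠ 0 := by have := (isRLE_rle s).1 p hp; omega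
  simp [Nat.digits_of_lt 10 _ hpos (h p hp)]

theorem not_replicate_four_infix_flatMap {α β : Type*} (f g : β → α) (d : α) :
    ∀ {L : List β}, (L.map g).IsChain (· ≠ ·) →
      ¬ List.replicate 4 d <:+: L.flatMap fun b => [f b, g b]
  | [], _, h => by simpa using h.length_le
  | [b], _, h => by simpa using h.length_le
  | b :: c :: L, hL, h => by
    obtain ⟨hbc, hL⟩ := List.isChain_cons_cons.mp hL
    simp only [List.flatMap_cons, List.cons_append, List.nil_append] at h
    rw [List.infix_cons_iff, List.infix_cons_iff] at h
    rcases h with h | h | h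
    · simp only [List.replicate_succ, List.cons_prefix_cons] at h
      exact hbc (h.2.1.symm.trans h.2.2.2.1)
    · simp only [List.replicate_succ, List.cons_prefix_cons] at h
      exact hbc (h.1.symm.trans h.2.2.1)
    · exact not_replicate_four_infix_flatMap f g d (L := c :: L) hL (by simpa using h)

/-- Kid stability: `Z` preserves being a kid string with all run lengths ≤ 3. -/
theorem Z_kid_stable (s : List ℕ) (hkid : ∀ d ∈ s, d ≤ 3)
    (hrun : ∀ p ∈ rle s, p.2 ≤ 3) :
    (∀ d ∈ Z s, d ≤ 3) ∧ ∀ p ∈ rle (Z s), p.2 ≤ 3 := by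
  have hmax : ∀ p ∈ rle s, max p.2 p.1 ≤ 3 := fun p hp =>
    max_le (hrun p hp) (hkid _ (fst_mem_of_mem_rle hp))
  rw [Z_eq_flatMap fun p hp => (hmax p hp).trans_lt (by norm_num)]
  constructor
  · simp only [List.mem_flatMap, List.mem_cons, List.not_mem_nil, or_false]
    rintro d ⟨p, hp, rfl | rfl⟩
    exacts [hmax p hp, hkid _ (fst_mem_of_mem_rle hp)]
  · intro p hp
    by_contra! hlong
    refine not_replicate_four_infix_flatMap (fun p => max p.2 p.1) Prod.fst p.1
      (isRLE_rle s).2.1 ?_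
    exact (List.prefix_replicate_iff.mpr ⟨hlong, by simp⟩).isInfix.trans
      (replicate_infix_of_mem_rle hp)
end
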